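/- Let d2, a2, h, q > 0 and 0 ≤ x1 < L. If w is a solution of the upstream toxicant boundary value problem on [x1, L], then w(x) < h/q for all x ∈ [x1, L]. -/

import Mathlib

/-- `w` is a solution of the upstream toxicant boundary value problem with
parameters `d2, a2, h, q` on the interval `[x1, L]`. -/
def IsUpstreamSolution (d2 a2 h q x1 L : ℝ) (w : ℝ → ℝ) : Prop :=
  ContDiff ℝ 2 w ∧
  (∀ x ∈ Set.Icc x1 L,
      d2 * deriv (deriv w) x - a2 * deriv w x + h - q * w x = 0) ∧
  d2 * deriv w x1 - a2 * w x1 = 0 ∧ deriv w L = 0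

/-- any solution of the upstream toxicant boundary value problem
is bounded above by `h / q` on `[x1, L]`. -/
theorem upstream_upper_bound
    (d2 a2 h q x1 L : ℝ) (w : ℝ → ℝ)
    (hd2 : 0 < d2) (ha2 : 0 < a2) (hh : 0 < h) (hq : 0 < q)
    (hx1 : 0 ≤ x1) (hx1L : x1 < L)
    (hw : IsUpstreamSolution d2 a2 h q x1 L w) :
    ∀ x ∈ Set.Icc x1 L, w x < h / q := by
  obtain ⟨hC, hODE, hBC1, hBC2⟩ := hw
  have hwD : Differentiable ℝ w := hC.differentiable two_ne_zero
  have hC1 : ContDiff ℝ 1 (deriv w) :=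
    ((contDiff_succ_iff_deriv.mp (show ContDiff ℝ (1+1) w by exact_mod_cast hC)).2).2
  have hwD2 : Differentiable ℝ (deriv w) := hC1.differentiable one_ne_zero
  have hdw : ∀ x : ℝ, HasDerivAt w (deriv w x) x := fun x => (hwD x).hasDerivAt
  have hdw2 : ∀ x : ℝ, HasDerivAt (deriv w) (deriv (deriv w) x) x :=
    fun x => (hwD2 x).hasDerivAt
  have hqh : q * (h / q) = h := mul_div_cancel₀ h hq.ne'
  -- The energy function G
  set G : ℝ → ℝ := fun y => d2 * (deriv w y)^2 - q * (w y - h/q)^2 with hGdef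
  have hG : ∀ x : ℝ, HasDerivAt G
      (d2 * ((2:ℝ) * (deriv w x)^1 * deriv (deriv w) x)
        - q * ((2:ℝ) * (w x - h/q)^1 * deriv w x)) x := by
    intro x
    exact (((hdw2 x).pow 2).const_mul d2).sub
      ((((hdw x).sub_const (h/q)).pow 2).const_mul q)
  have hGmono : MonotoneOn G (Set.Icc x1 L) := by
    apply monotoneOn_of_deriv_nonneg (convex_Icc x1 L)
    · exact fun x _ => ((hG x).continuousAt).continuousWithinAt
    · exact fun x _ => ((hG x).differentiableAt).differentiableWithinAt
    · intro x hx
      rw [interior_Icc] at hx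
      rw [(hG x).deriv]
      have hode := hODE x (Set.mem_Icc.mpr ⟨hx.1.le, hx.2.le⟩)
      have : d2 * ((2:ℝ) * (deriv w x)^1 * deriv (deriv w) x)
          - q * ((2:ℝ) * (w x - h/q)^1 * deriv w x) = 2 * a2 * (deriv w x)^2 := by
        linear_combination (2 * deriv w x) * hode + (2 * deriv w x) * hqh
      rw [this]; positivity
  -- Step A: d2 * w'^2 ≤ q * (w - h/q)^2 on [x1, L]
  have key : ∀ x ∈ Set.Icc x1 L, d2 * (deriv w x)^2 ≤ q * (w x - h/q)^2 := by
    intro x hx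
    have h1 : G x ≤ G L := hGmono hx (Set.mem_Icc.mpr ⟨hx1L.le, le_rfl⟩) hx.2
    have h2 : G L = - (q * (w L - h/q)^2) := by
      simp only [hGdef, hBC2]; ring
    have h3 : (0:ℝ) ≤ q * (w L - h/q)^2 := by positivity
    simp only [hGdef] at h1
    linarith
  -- Step B: w never equals h/q on [x1, L]
  have hne : ∀ z ∈ Set.Icc x1 L, w z ≠ h / q := by
    intro z hz hzeq
    have hk0 : (0:ℝ) < q / d2 := div_pos hq hd2
    set k : ℝ := Real.sqrt (q / d2) with hkdef
    have hk : 0 < k := Real.sqrt_pos.mpr hk0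
    have hk2 : k^2 = q / d2 := Real.sq_sqrt hk0.le
    set H : ℝ → ℝ := fun y => (w y - h/q)^2 * Real.exp (2*k*y) with hHdef
    have hH : ∀ x : ℝ, HasDerivAt H
        ((2:ℝ) * (w x - h/q)^1 * deriv w x * Real.exp (2*k*x)
          + (w x - h/q)^2 * (Real.exp (2*k*x) * (2*k))) x := by
      intro x
      have he : HasDerivAt (fun y => Real.exp (2*k*y)) (Real.exp (2*k*x) * (2*k)) x := by
        have : HasDerivAt (fun y : ℝ => 2*k*y) (2*k) x := by
          simpa using (hasDerivAt_id x).const_mul (2*k)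
        exact this.exp
      exact (((hdw x).sub_const (h/q)).pow 2).mul he
    have hHmono : MonotoneOn H (Set.Icc x1 L) := by
      apply monotoneOn_of_deriv_nonneg (convex_Icc x1 L)
      · exact fun x _ => ((hH x).continuousAt).continuousWithinAt
      · exact fun x _ => ((hH x).differentiableAt).differentiableWithinAt
      · intro x hx
        rw [interior_Icc] at hx
        rw [(hH x).deriv]
        have hkey := key x (Set.mem_Icc.mpr ⟨hx.1.le, hx.2.le⟩)
        have hv2 : (deriv w x)^2 ≤ k^2 * (w x - h/q)^2 := by
          rw [hk2]
          rw [div_mul_eq_mul_div, le_div_iff₀ hd2]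
          nlinarith [hkey]
        have hE : (0:ℝ) < Real.exp (2*k*x) := Real.exp_pos _
        have hfac : 0 ≤ 2 * (w x - h/q) * deriv w x + (w x - h/q)^2 * (2*k) := by
          have h1 : 0 ≤ (k * (w x - h/q) + deriv w x)^2 := sq_nonneg _
          have h2 : 0 ≤ k^2 * (w x - h/q)^2 - (deriv w x)^2 := by linarith
          nlinarith [hk, h1, h2]
        have : (2:ℝ) * (w x - h/q)^1 * deriv w x * Real.exp (2*k*x)
            + (w x - h/q)^2 * (Real.exp (2*k*x) * (2*k))
            = (2 * (w x - h/q) * deriv w x + (w x - h/q)^2 * (2*k)) * Real.exp (2*k*x) := by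
          ring
        rw [this]
        exact mul_nonneg hfac hE.le
    have hHz : H z = 0 := by simp [hHdef, hzeq]
    have hHx1 : H x1 = 0 := by
      have h1 : H x1 ≤ H z := hHmono (Set.mem_Icc.mpr ⟨le_rfl, hx1L.le⟩) hz hz.1
      have h2 : 0 ≤ H x1 := by positivity
      linarith [hHz ▸ h1]
    have hwx1 : w x1 = h / q := by
      have hE : (0:ℝ) < Real.exp (2*k*x1) := Real.exp_pos _
      have : (w x1 - h/q)^2 = 0 := by
        by_contra hne0
        have : 0 < (w x1 - h/q)^2 * Real.exp (2*k*x1) := by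
          have := (sq_nonneg (w x1 - h/q)).lt_of_ne (Ne.symm hne0)
          positivity
        simp only [hHdef] at hHx1; linarith
      have := sq_eq_zero_iff.mp this
      linarith
    have hdx1 : deriv w x1 = 0 := by
      have hk1 := key x1 (Set.mem_Icc.mpr ⟨le_rfl, hx1L.le⟩)
      rw [hwx1] at hk1
      simp at hk1
      have h2 : deriv w x1 ^ 2 = 0 := by nlinarith [sq_nonneg (deriv w x1), hd2]
      exact pow_eq_zero_iff (by norm_num) |>.mp h2
    rw [hdx1, hwx1] at hBC1
    have : 0 < a2 * (h/q) := by positivity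
    linarith
  -- Main argument
  intro x hx
  by_contra hcon
  push_neg at hcon
  have hgt : h / q < w x := lt_of_le_of_ne hcon (Ne.symm (hne x hx))
  -- w > h/q everywhere on [x1, L]
  have hpos : ∀ y ∈ Set.Icc x1 L, h / q < w y := by
    intro y hy
    rcases lt_or_ge (h/q) (w y) with h1 | h1
    · exact h1
    · exfalso
      have hcsub : Set.uIcc y x ⊆ Set.Icc x1 L := by
        rw [Set.uIcc_eq_union]
        apply Set.union_subset
        · exact Set.Icc_subset_Icc hy.1 hx.2
        · exact Set.Icc_subset_Icc hx.1 hy.2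
      have hmem : h / q ∈ Set.uIcc (w y) (w x) :=
        Set.mem_uIcc.mpr (Or.inl ⟨h1, hgt.le⟩)
      obtain ⟨z, hzmem, hzeq⟩ :=
        intermediate_value_uIcc (hwD.continuous.continuousOn) hmem
      exact hne z (hcsub hzmem) hzeq
  -- p = exp(-(a2/d2) x) * w' is strictly increasing
  set p : ℝ → ℝ := fun y => Real.exp (-(a2/d2) * y) * deriv w y with hpdef
  have hp : ∀ s : ℝ, HasDerivAt p
      (Real.exp (-(a2/d2) * s) * (-(a2/d2)) * deriv w s
        + Real.exp (-(a2/d2) * s) * deriv (deriv w) s) s := by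
    intro s
    have he : HasDerivAt (fun y => Real.exp (-(a2/d2) * y))
        (Real.exp (-(a2/d2) * s) * (-(a2/d2))) s := by
      have : HasDerivAt (fun y : ℝ => -(a2/d2) * y) (-(a2/d2)) s := by
        simpa using (hasDerivAt_id s).const_mul (-(a2/d2))
      exact this.exp
    exact he.mul (hdw2 s)
  have hpmono : StrictMonoOn p (Set.Icc x1 L) := by
    apply strictMonoOn_of_deriv_pos (convex_Icc x1 L)
    · exact fun s _ => ((hp s).continuousAt).continuousWithinAt
    · intro s hs
      rw [interior_Icc] at hs
      rw [(hp s).deriv]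
      have hsIcc : s ∈ Set.Icc x1 L := Set.mem_Icc.mpr ⟨hs.1.le, hs.2.le⟩
      have hode := hODE s hsIcc
      have hws : h / q < w s := hpos s hsIcc
      have hqw : 0 < q * w s - h := by
        have : q * (h/q) < q * w s := (mul_lt_mul_iff_right₀ hq).mpr hws
        rw [hqh] at this; linarith
      have hE : (0:ℝ) < Real.exp (-(a2/d2) * s) := Real.exp_pos _
      have hiq : (-(a2/d2)) * deriv w s + deriv (deriv w) s = (q * w s - h) / d2 := by
        field_simp
        linarith [hode]
      have heq : Real.exp (-(a2/d2) * s) * (-(a2/d2)) * deriv w s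
          + Real.exp (-(a2/d2) * s) * deriv (deriv w) s
          = Real.exp (-(a2/d2) * s) * ((q * w s - h) / d2) := by
        linear_combination Real.exp (-(a2/d2) * s) * hiq
      rw [heq]
      positivity
  have hpL : p L = 0 := by simp [hpdef, hBC2]
  have hplt : p x1 < p L :=
    hpmono (Set.mem_Icc.mpr ⟨le_rfl, hx1L.le⟩) (Set.mem_Icc.mpr ⟨hx1L.le, le_rfl⟩) hx1L
  have hwx1pos : 0 < deriv w x1 := by
    have hwp : 0 < w x1 := by
      have := hpos x1 (Set.mem_Icc.mpr ⟨le_rfl, hx1L.le⟩)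
      have : 0 < h / q := div_pos hh hq
      linarith [hpos x1 (Set.mem_Icc.mpr ⟨le_rfl, hx1L.le⟩)]
    nlinarith [hBC1, mul_pos ha2 hwp]
  have hpx1 : 0 < p x1 := by
    have hE : (0:ℝ) < Real.exp (-(a2/d2) * x1) := Real.exp_pos _
    simp only [hpdef]
    positivity
  linarith [hpL ▸ hplt]
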